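/- Let Y be a discrete random variable, S a finite set of discrete random variables with Y ∉ S, and assume Y has multiple Markov boundaries within S. Fix M₀ to be one of them. For 0 < ε < 1, let S^ε be obtained from S by replacing each variable Z ∈ S \ M₀ by its ε-noise perturbation Z^ε (with mutually independent noise variables and switching indicators, jointly independent of all original variables and of Y). Then in the resulting joint distribution of (S^ε, Y), the set M₀ is the unique Markov boundary of Y within S^ε. -/

import Mathlib

open scoped BigOperators

noncomputable section

/-- `p` is a probability mass function on the finite type `Ω`. -/
def IsDist {Ω : Type*} [Fintype Ω] (p : Ω → ℝ) : Prop :=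
  (∀ w, 0 ≤ p w) ∧ ∑ w, p w = 1

/-- Total variation distance between two distributions on the same finite type. -/
def tvDist {Ω : Type*} [Fintype Ω] (p q : Ω → ℝ) : ℝ :=
  (∑ w, |p w - q w|) / 2

variable {ι : Type*} [Fintype ι] [DecidableEq ι]
variable {α : ι → Type*} [∀ i, Fintype (α i)] [∀ i, DecidableEq (α i)]

/-- Marginal probability, under joint pmf `p`, of the event that the variables in the
collection `A` take the values prescribed by the configuration `x`. -/
def margProb (p : (∀ i, α i) → ℝ) (A : Finset ι) (x : ∀ i, α i) : ℝ :=
  ∑ w : ∀ i, α i, if ∀ i ∈ A, w i = x i then p w else 0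

/-- Conditional independence of the collections `A` and `B` given the collection `C`:
`f(a, b | c) = f(a | c) f(b | c)` whenever `f(c) > 0` (stated in multiplied-out form). -/
def CondIndep (p : (∀ i, α i) → ℝ) (A B C : Finset ι) : Prop :=
  ∀ x : ∀ i, α i, 0 < margProb p C x →
    margProb p (A ∪ B ∪ C) x * margProb p C x =
      margProb p (A ∪ C) x * margProb p (B ∪ C) x

/-- `M` is a Markov blanket of the variable `y` within the collection `T`. -/
def MarkovBlanket (p : (∀ i, α i) → ℝ) (y : ι) (T M : Finset ι) : Prop :=
  M ⊆ T ∧ CondIndep p {y} (T \ M) M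

/-- `M` is a Markov boundary of `y` within `T`: a Markov blanket no proper subset of
which is a Markov blanket. -/
def MarkovBoundary (p : (∀ i, α i) → ℝ) (y : ι) (T M : Finset ι) : Prop :=
  MarkovBlanket p y T M ∧ ∀ M' ⊂ M, ¬ MarkovBlanket p y T M'

/-- Mutual information between the collections `A` and `B`
(with the convention `0 · log(junk) = 0` on zero-probability terms). -/
def MI (p : (∀ i, α i) → ℝ) (A B : Finset ι) : ℝ :=
  ∑ w : ∀ i, α i, p w *
    Real.log (margProb p (A ∪ B) w / (margProb p A w * margProb p B w))

/-- Conditional mutual information between collections `A` and `B` given `C`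
(with the convention `0 · log(junk) = 0` on zero-probability terms). -/
def CMI (p : (∀ i, α i) → ℝ) (A B C : Finset ι) : ℝ :=
  ∑ w : (∀ i, α i), p w *
    Real.log ((margProb p (A ∪ B ∪ C) w * margProb p C w) /
      (margProb p (A ∪ C) w * margProb p (B ∪ C) w))


/-- Joint pmf of the collection obtained by replacing, for each `i ∈ N`, the variable
`Z_i` by its ε-noise perturbation `Z_i^ε`: with probability `1 - ε` the perturbed
variable equals `Z_i` and otherwise it equals an independent noise variable with pmf
`q i`; the noise variables and Bernoulli(ε) switching indicators are mutually
independent and jointly independent of all the original variables. -/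
def perturb (p : (∀ i, α i) → ℝ) (N : Finset ι) (ε : ℝ) (q : ∀ i, α i → ℝ) :
    (∀ i, α i) → ℝ :=
  fun w => ∑ w₀ : ∀ i, α i, p w₀ *
    ∏ i : ι,
      if i ∈ N then (1 - ε) * (if w i = w₀ i then 1 else 0) + ε * q i (w i)
      else (if w i = w₀ i then 1 else 0)

/-!
The noise acts on `S \ M₀` coordinatewise through a Markov kernel, so it preserves
`Y ⊥ S \ M₀ | M₀` and `M₀` remains a Markov blanket. Conversely, let `M` be a Markov blanket
after the perturbation with `M₀ ⊄ M`, and put `A = M₀ \ M`, `P = M ∩ M₀`, `Q = M \ M₀`.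
Then `Y ⊥ A | P ∪ Q` because `M` is a blanket and `Y ⊥ Q | A ∪ P` because `M₀` is one; since
the noisy variables `Q` take every value with positive probability given any values of
`A ∪ P`, the intersection property yields `Y ⊥ A | P`. No noisy variable occurs in this
statement, so it holds for the original distribution as well, and contraction with
`Y ⊥ S \ M₀ | M₀` turns `P ⊊ M₀` into a Markov blanket, against the minimality of `M₀`.
So `M₀` is contained in every Markov blanket after the perturbation, which makes it the
unique Markov boundary.
-/

section Marginals

variable {p : (∀ i, α i) → ℝ}

lemma margProb_nonneg (hp : ∀ w, 0 ≤ p w) (A : Finset ι) (x : ∀ i, α i) :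
    0 ≤ margProb p A x :=
  Finset.sum_nonneg fun w _ => by split_ifs <;> simp [hp w]

lemma margProb_anti (hp : ∀ w, 0 ≤ p w) {A B : Finset ι} (hAB : A ⊆ B) (x : ∀ i, α i) :
    margProb p B x ≤ margProb p A x :=
  Finset.sum_le_sum fun w _ => by
    by_cases hB : ∀ i ∈ B, w i = x i
    · rw [if_pos hB, if_pos fun i hi => hB i (hAB hi)]
    · rw [if_neg hB]; split_ifs <;> simp [hp w]

lemma margProb_eq_zero_of_subset (hp : ∀ w, 0 ≤ p w) {A B : Finset ι} (hAB : A ⊆ B)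
    {x : ∀ i, α i} (hA : margProb p A x = 0) : margProb p B x = 0 :=
  le_antisymm (hA ▸ margProb_anti hp hAB x) (margProb_nonneg hp B x)

lemma margProb_congr {A : Finset ι} {x x' : ∀ i, α i} (h : ∀ i ∈ A, x i = x' i) :
    margProb p A x = margProb p A x' :=
  Finset.sum_congr rfl fun w _ => by
    have : (∀ i ∈ A, w i = x i) ↔ ∀ i ∈ A, w i = x' i :=
      forall₂_congr fun i hi => by rw [h i hi]
    simp only [this]

def agreeOutside (D : Finset ι) (x : ∀ i, α i) : Finset (∀ i, α i) :=
  Finset.univ.filter fun z => ∀ i ∉ D, z i = x i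

lemma agreeOutside_empty (x : ∀ i, α i) : agreeOutside (∅ : Finset ι) x = {x} := by
  ext z
  simp [agreeOutside, funext_iff]

lemma margProb_eq_of_mem_agreeOutside {A D : Finset ι} {x z : ∀ i, α i}
    (hz : z ∈ agreeOutside D x) (hAD : Disjoint A D) : margProb p A z = margProb p A x :=
  margProb_congr fun i hi =>
    (Finset.mem_filter.1 hz).2 i (Finset.disjoint_left.1 hAD hi)

lemma sum_agreeOutside_mul_margProb (g : ∀ i, α i → ℝ) {B D : Finset ι} (hDB : D ⊆ B)
    (x : ∀ i, α i) :
    ∑ z ∈ agreeOutside D x, (∏ i ∈ D, g i (z i)) * margProb p B z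
      = margProb (fun w => (∏ i ∈ D, g i (w i)) * p w) (B \ D) x := by
  simp only [margProb, Finset.mul_sum]
  rw [Finset.sum_comm]
  refine Finset.sum_congr rfl fun w _ => ?_
  -- the only configuration in `agreeOutside D x` that can agree with `w` on `B`
  set z₀ := D.piecewise w x with hz₀_def
  have hz₀ : z₀ ∈ agreeOutside D x := by
    simp +contextual [agreeOutside, z₀, Finset.piecewise_eq_of_notMem]
  have hunique : ∀ z ∈ agreeOutside D x, (∀ i ∈ B, w i = z i) → z = z₀ := by
    intro z hz hwz
    funext i
    by_cases hi : i ∈ D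
    · rw [hz₀_def, Finset.piecewise_eq_of_mem _ _ _ hi, hwz i (hDB hi)]
    · rw [hz₀_def, Finset.piecewise_eq_of_notMem _ _ _ hi, (Finset.mem_filter.1 hz).2 i hi]
  have hcond : (∀ i ∈ B, w i = z₀ i) ↔ ∀ i ∈ B \ D, w i = x i := by
    constructor
    · intro h i hi
      rw [Finset.mem_sdiff] at hi
      rw [h i hi.1, hz₀_def, Finset.piecewise_eq_of_notMem _ _ _ hi.2]
    · intro h i hi
      by_cases hiD : i ∈ D
      · rw [hz₀_def, Finset.piecewise_eq_of_mem _ _ _ hiD]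
      · rw [hz₀_def, Finset.piecewise_eq_of_notMem _ _ _ hiD]
        exact h i (Finset.mem_sdiff.2 ⟨hi, hiD⟩)
  have hweight : ∏ i ∈ D, g i (z₀ i) = ∏ i ∈ D, g i (w i) :=
    Finset.prod_congr rfl fun i hi => by rw [hz₀_def, Finset.piecewise_eq_of_mem _ _ _ hi]
  rw [Finset.sum_eq_single_of_mem z₀ hz₀ fun z hz hne => by
    rw [if_neg fun h => hne (hunique z hz h), mul_zero]]
  simp only [hcond, hweight, mul_ite, mul_zero]

lemma sum_agreeOutside_margProb {B D : Finset ι} (hDB : D ⊆ B) (x : ∀ i, α i) :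
    ∑ z ∈ agreeOutside D x, margProb p B z = margProb p (B \ D) x := by
  simpa using sum_agreeOutside_mul_margProb (p := p) (fun _ _ => 1) hDB x

end Marginals

section CondIndep

variable {p : (∀ i, α i) → ℝ} {y : ι}

lemma CondIndep.mul_eq_of_mem_agreeOutside {B C D : Finset ι} (h : CondIndep p {y} B C)
    {x z : ∀ i, α i} (hx : 0 < margProb p C x) (hz : z ∈ agreeOutside D x)
    (hD : Disjoint ({y} ∪ C) D) :
    margProb p ({y} ∪ B ∪ C) z * margProb p C x
      = margProb p ({y} ∪ C) x * margProb p (B ∪ C) z := by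
  have hCz : margProb p C z = margProb p C x :=
    margProb_eq_of_mem_agreeOutside hz (hD.mono_left Finset.subset_union_right)
  rw [← hCz, ← margProb_eq_of_mem_agreeOutside hz hD]
  exact h z (hCz ▸ hx)

lemma CondIndep.mono_left {B C T : Finset ι} (h : CondIndep p {y} B C) (hTB : T ⊆ B)
    (hyB : y ∉ B) (hBC : Disjoint B C) : CondIndep p {y} T C := by
  intro x hx
  have e₁ : ({y} ∪ B ∪ C) \ (B \ T) = {y} ∪ T ∪ C := by grind [Finset.disjoint_left]
  have e₂ : (B ∪ C) \ (B \ T) = T ∪ C := by grind [Finset.disjoint_left]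
  rw [← e₁, ← e₂, ← sum_agreeOutside_margProb (by grind), ← sum_agreeOutside_margProb (by grind),
    Finset.sum_mul, Finset.mul_sum]
  exact Finset.sum_congr rfl fun z hz =>
    h.mul_eq_of_mem_agreeOutside hx hz (by grind [Finset.disjoint_left])

lemma CondIndep.contraction (hp : ∀ w, 0 ≤ p w) {A B C : Finset ι}
    (h₁ : CondIndep p {y} A (B ∪ C)) (h₂ : CondIndep p {y} B C) :
    CondIndep p {y} (A ∪ B) C := by
  intro x hx
  have e₁ : {y} ∪ (A ∪ B) ∪ C = {y} ∪ A ∪ (B ∪ C) := by grind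
  have e₂ : {y} ∪ (B ∪ C) = {y} ∪ B ∪ C := by grind
  rw [e₁, Finset.union_assoc A B C]
  rcases (margProb_nonneg hp (B ∪ C) x).eq_or_lt with h0 | hBC
  · rw [margProb_eq_zero_of_subset (B := {y} ∪ A ∪ (B ∪ C)) hp (by grind) h0.symm,
      margProb_eq_zero_of_subset (B := A ∪ (B ∪ C)) hp (by grind) h0.symm, zero_mul, mul_zero]
  · have H₁ := h₁ x hBC
    have H₂ := h₂ x hx
    rw [e₂] at H₁
    refine mul_right_cancel₀ hBC.ne' ?_
    linear_combination margProb p C x * H₁ + margProb p (A ∪ (B ∪ C)) x * H₂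

lemma CondIndep.intersection (hp : ∀ w, 0 ≤ p w) {A P Q : Finset ι}
    (hQ : Disjoint ({y} ∪ A ∪ P) Q)
    (h₁ : CondIndep p {y} A (P ∪ Q)) (h₂ : CondIndep p {y} Q (A ∪ P))
    (hpos : ∀ x z, 0 < margProb p (A ∪ P) x → z ∈ agreeOutside Q x →
      0 < margProb p (A ∪ P ∪ Q) z) :
    CondIndep p {y} A P := by
  intro x _
  rcases (margProb_nonneg hp (A ∪ P) x).eq_or_lt with h0 | hAP
  · rw [margProb_eq_zero_of_subset hp (by grind) h0.symm, ← h0, zero_mul, mul_zero]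
  -- given `A, P`, the law of `y` does not depend on `Q`, so summing `Q` out keeps it
  have key : ∀ z ∈ agreeOutside Q x, margProb p ({y} ∪ P ∪ Q) z * margProb p (A ∪ P) x
      = margProb p ({y} ∪ A ∪ P) x * margProb p (P ∪ Q) z := by
    intro z hz
    have hAPz : margProb p (A ∪ P) z = margProb p (A ∪ P) x :=
      margProb_eq_of_mem_agreeOutside hz (by grind [Finset.disjoint_left])
    have hyAPz : margProb p ({y} ∪ A ∪ P) z = margProb p ({y} ∪ A ∪ P) x :=
      margProb_eq_of_mem_agreeOutside hz hQ
    have hAPQ := hpos x z hAP hz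
    have H₁ := h₁ z (hAPQ.trans_le (margProb_anti hp (by grind) z))
    have H₂ := h₂ z (hAPz ▸ hAP)
    rw [show {y} ∪ A ∪ (P ∪ Q) = {y} ∪ Q ∪ (A ∪ P) by grind,
      show {y} ∪ (P ∪ Q) = {y} ∪ P ∪ Q by grind, show A ∪ (P ∪ Q) = A ∪ P ∪ Q by grind] at H₁
    rw [show Q ∪ (A ∪ P) = A ∪ P ∪ Q by grind, hAPz,
      show {y} ∪ (A ∪ P) = {y} ∪ A ∪ P by grind, hyAPz] at H₂
    refine mul_right_cancel₀ hAPQ.ne' ?_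
    linear_combination margProb p (P ∪ Q) z * H₂ - margProb p (A ∪ P) x * H₁
  have hyP := sum_agreeOutside_margProb (p := p) (show Q ⊆ {y} ∪ P ∪ Q by grind) x
  have hP := sum_agreeOutside_margProb (p := p) (show Q ⊆ P ∪ Q by grind) x
  rw [show ({y} ∪ P ∪ Q) \ Q = {y} ∪ P by grind [Finset.disjoint_left]] at hyP
  rw [show (P ∪ Q) \ Q = P by grind [Finset.disjoint_left]] at hP
  rw [← hyP, ← hP, Finset.sum_mul, Finset.mul_sum]
  exact (Finset.sum_congr rfl key).symm

end CondIndep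

/-- Probability that the perturbed `i`-th variable takes the value `a` when the original
one takes the value `b`. -/
def noiseKernel (N : Finset ι) (ε : ℝ) (q : ∀ i, α i → ℝ) (i : ι) (a b : α i) : ℝ :=
  if i ∈ N then (1 - ε) * (if a = b then 1 else 0) + ε * q i a
  else if a = b then 1 else 0

section Perturb

variable {p : (∀ i, α i) → ℝ} {N : Finset ι} {ε : ℝ} {q : ∀ i, α i → ℝ}

lemma perturb_apply (w : ∀ i, α i) :
    perturb p N ε q w = ∑ w₀, p w₀ * ∏ i, noiseKernel N ε q i (w i) (w₀ i) :=
  rfl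

lemma perturb_nonneg (hp : ∀ w, 0 ≤ p w) (hq : ∀ i ∈ N, ∀ v, 0 ≤ q i v) (hε0 : 0 ≤ ε)
    (hε1 : ε ≤ 1) (w : ∀ i, α i) : 0 ≤ perturb p N ε q w := by
  have hkernel : ∀ i (a b : α i), 0 ≤ noiseKernel N ε q i a b := by
    intro i a b
    unfold noiseKernel
    split_ifs with hi <;> first
      | positivity
      | exact add_nonneg (mul_nonneg (by linarith) (by positivity)) (mul_nonneg hε0 (hq i hi a))
  exact Finset.sum_nonneg fun w₀ _ =>
    mul_nonneg (hp w₀) (Finset.prod_nonneg fun i _ => hkernel i _ _)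

lemma margProb_perturb_eq_sum_prod (hq : ∀ i ∈ N, ∑ v, q i v = 1) (A : Finset ι)
    (x : ∀ i, α i) :
    margProb (perturb p N ε q) A x
      = ∑ w₀, p w₀ * ∏ i ∈ A, noiseKernel N ε q i (x i) (w₀ i) := by
  -- the indicator of `w = x on A` is a product over coordinates, so the sum over `w` factorizes
  have hfactor : ∀ w : ∀ i, α i,
      (if ∀ i ∈ A, w i = x i then perturb p N ε q w else 0)
        = ∑ w₀, p w₀ * ∏ i, (if i ∈ A then (if w i = x i then 1 else 0) else 1)
            * noiseKernel N ε q i (w i) (w₀ i) := by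
    intro w
    simp only [Finset.prod_mul_distrib, Fintype.prod_ite_mem, Finset.prod_boole, perturb_apply]
    split_ifs <;> simp
  have hcolumn : ∀ (w₀ : ∀ i, α i) (i : ι),
      ∑ a, (if i ∈ A then (if a = x i then 1 else 0) else 1) * noiseKernel N ε q i a (w₀ i)
        = if i ∈ A then noiseKernel N ε q i (x i) (w₀ i) else 1 := by
    intro w₀ i
    split_ifs
    · simp
    · by_cases hi : i ∈ N
      · simp [noiseKernel, hi, Finset.sum_add_distrib, ← Finset.mul_sum, hq i hi]
      · simp [noiseKernel, hi]
  rw [margProb, Finset.sum_congr rfl fun w _ => hfactor w, Finset.sum_comm]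
  refine Finset.sum_congr rfl fun w₀ _ => ?_
  rw [← Finset.mul_sum, ← Fintype.prod_sum fun i a =>
    (if i ∈ A then (if a = x i then 1 else 0) else 1) * noiseKernel N ε q i a (w₀ i)]
  simp only [hcolumn, Fintype.prod_ite_mem]

lemma margProb_perturb (hq : ∀ i ∈ N, ∑ v, q i v = 1) (A : Finset ι) (x : ∀ i, α i) :
    margProb (perturb p N ε q) A x
      = ∑ z ∈ agreeOutside (A ∩ N) x,
          (∏ i ∈ A ∩ N, noiseKernel N ε q i (x i) (z i)) * margProb p A z := by
  rw [sum_agreeOutside_mul_margProb _ Finset.inter_subset_left, margProb_perturb_eq_sum_prod hq,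
    margProb]
  refine Finset.sum_congr rfl fun w₀ _ => ?_
  have hclean : ∏ i ∈ A \ (A ∩ N), noiseKernel N ε q i (x i) (w₀ i)
      = if ∀ i ∈ A \ (A ∩ N), w₀ i = x i then 1 else 0 := by
    have hid : ∀ i ∈ A \ (A ∩ N),
        noiseKernel N ε q i (x i) (w₀ i) = if w₀ i = x i then 1 else 0 := by
      intro i hi
      rw [noiseKernel, if_neg (by grind)]
      simp only [eq_comm]
    rw [Finset.prod_congr rfl hid, Finset.prod_boole]
    congr
  rw [← Finset.prod_sdiff Finset.inter_subset_left, hclean]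
  split_ifs <;> ring

lemma margProb_perturb_of_disjoint (hq : ∀ i ∈ N, ∑ v, q i v = 1) {A : Finset ι}
    (hA : Disjoint A N) (x : ∀ i, α i) :
    margProb (perturb p N ε q) A x = margProb p A x := by
  simp [margProb_perturb hq, Finset.disjoint_iff_inter_eq_empty.1 hA, agreeOutside_empty]

lemma margProb_perturb_pos (hp : ∀ w, 0 ≤ p w) (hq_pos : ∀ i ∈ N, ∀ v, 0 < q i v)
    (hq_sum : ∀ i ∈ N, ∑ v, q i v = 1) (hε0 : 0 < ε) (hε1 : ε ≤ 1) {A B : Finset ι}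
    (hA : Disjoint A N) (hB : B ⊆ N) {x : ∀ i, α i} (hx : 0 < margProb p A x) :
    0 < margProb (perturb p N ε q) (A ∪ B) x := by
  have hnoise : ∀ i ∈ B, 0 < ε * q i (x i) := fun i hi => mul_pos hε0 (hq_pos i (hB hi) _)
  have hkernel : ∀ i ∈ B, ∀ b, ε * q i (x i) ≤ noiseKernel N ε q i (x i) b := by
    intro i hi b
    rw [noiseKernel, if_pos (hB hi), le_add_iff_nonneg_left]
    exact mul_nonneg (sub_nonneg.2 hε1) (by positivity)
  calc 0 < (∏ i ∈ B, ε * q i (x i)) * margProb p A x := mul_pos (Finset.prod_pos hnoise) hx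
    _ = ∑ z ∈ agreeOutside B x, (∏ i ∈ B, ε * q i (x i)) * margProb p (A ∪ B) z := by
      rw [← Finset.mul_sum, sum_agreeOutside_margProb Finset.subset_union_right,
        show (A ∪ B) \ B = A by grind [Finset.disjoint_left]]
    _ ≤ ∑ z ∈ agreeOutside B x,
          (∏ i ∈ B, noiseKernel N ε q i (x i) (z i)) * margProb p (A ∪ B) z :=
      Finset.sum_le_sum fun z _ => mul_le_mul_of_nonneg_right
        (Finset.prod_le_prod (fun i hi => (hnoise i hi).le)
          fun i hi => hkernel i hi (z i))
        (margProb_nonneg hp _ _)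
    _ = margProb (perturb p N ε q) (A ∪ B) x := by
      rw [margProb_perturb hq_sum, show (A ∪ B) ∩ N = B by grind [Finset.disjoint_left]]

end Perturb

section NoisyBoundary

variable {p : (∀ i, α i) → ℝ} {y : ι} {N : Finset ι} {ε : ℝ} {q : ∀ i, α i → ℝ}

lemma CondIndep.perturb (hq : ∀ i ∈ N, ∑ v, q i v = 1) {A C : Finset ι} (hAN : A ⊆ N)
    (hCN : Disjoint C N) (hyN : y ∉ N) (h : CondIndep p {y} A C) :
    CondIndep (perturb p N ε q) {y} A C := by
  intro x hx
  rw [margProb_perturb_of_disjoint hq hCN] at hx ⊢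
  rw [margProb_perturb_of_disjoint hq (A := {y} ∪ C) (by grind [Finset.disjoint_left]),
    margProb_perturb hq, margProb_perturb hq,
    show ({y} ∪ A ∪ C) ∩ N = A by grind [Finset.disjoint_left],
    show (A ∪ C) ∩ N = A by grind [Finset.disjoint_left], Finset.sum_mul, Finset.mul_sum]
  refine Finset.sum_congr rfl fun z hz => ?_
  rw [mul_assoc, h.mul_eq_of_mem_agreeOutside hx hz (by grind [Finset.disjoint_left])]
  ring

lemma condIndep_perturb_iff_of_disjoint (hq : ∀ i ∈ N, ∑ v, q i v = 1) {B C : Finset ι}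
    (hBN : Disjoint B N) (hCN : Disjoint C N) (hyN : y ∉ N) :
    CondIndep (perturb p N ε q) {y} B C ↔ CondIndep p {y} B C := by
  have hyBC : Disjoint ({y} ∪ B ∪ C) N := by grind [Finset.disjoint_left]
  have hyC : Disjoint ({y} ∪ C) N := by grind [Finset.disjoint_left]
  have hBC : Disjoint (B ∪ C) N := by grind [Finset.disjoint_left]
  simp only [CondIndep, margProb_perturb_of_disjoint hq hCN, margProb_perturb_of_disjoint hq hyBC,
    margProb_perturb_of_disjoint hq hyC, margProb_perturb_of_disjoint hq hBC]

lemma MarkovBoundary.not_condIndep_sdiff (hp : ∀ w, 0 ≤ p w) {S M₀ P : Finset ι}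
    (hM₀ : MarkovBoundary p y S M₀) (hP : P ⊂ M₀) : ¬ CondIndep p {y} (M₀ \ P) P := by
  intro h
  have hM₀S := hM₀.1.1
  have hblanket := CondIndep.contraction hp (A := S \ M₀)
    (by rw [Finset.sdiff_union_of_subset hP.subset]; exact hM₀.1.2) h
  rw [show S \ M₀ ∪ (M₀ \ P) = S \ P by grind] at hblanket
  exact hM₀.2 P hP ⟨hP.subset.trans hM₀S, hblanket⟩

lemma MarkovBoundary.subset_of_markovBlanket_perturb (hp : ∀ w, 0 ≤ p w) {S M₀ M : Finset ι}
    (hM₀ : MarkovBoundary p y S M₀) (hyS : y ∉ S) (hε0 : 0 < ε) (hε1 : ε ≤ 1)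
    (hq_pos : ∀ i ∈ S \ M₀, ∀ v, 0 < q i v) (hq_sum : ∀ i ∈ S \ M₀, ∑ v, q i v = 1)
    (hM : MarkovBlanket (perturb p (S \ M₀) ε q) y S M) : M₀ ⊆ M := by
  by_contra hsub
  have hM₀S := hM₀.1.1
  have hMS := hM.1
  have hAP : M₀ \ M ∪ M ∩ M₀ = M₀ := by grind
  have hQN : M \ M₀ ⊆ S \ M₀ := by grind
  have h₁ : CondIndep (perturb p (S \ M₀) ε q) {y} (M₀ \ M) (M ∩ M₀ ∪ M \ M₀) := by
    rw [show M ∩ M₀ ∪ M \ M₀ = M by grind]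
    exact hM.2.mono_left (by grind) (by grind) Finset.sdiff_disjoint
  have h₂ : CondIndep (perturb p (S \ M₀) ε q) {y} (M \ M₀) (M₀ \ M ∪ M ∩ M₀) := by
    rw [hAP]
    exact (hM₀.1.2.perturb hq_sum subset_rfl Finset.disjoint_sdiff (by grind)).mono_left hQN
      (by grind) Finset.sdiff_disjoint
  have hpos : ∀ x z, 0 < margProb (perturb p (S \ M₀) ε q) (M₀ \ M ∪ M ∩ M₀) x →
      z ∈ agreeOutside (M \ M₀) x →
      0 < margProb (perturb p (S \ M₀) ε q) (M₀ \ M ∪ M ∩ M₀ ∪ M \ M₀) z := by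
    intro x z hx hz
    rw [hAP] at hx ⊢
    rw [margProb_perturb_of_disjoint hq_sum Finset.disjoint_sdiff,
      ← margProb_eq_of_mem_agreeOutside hz (by grind [Finset.disjoint_left])] at hx
    exact margProb_perturb_pos hp hq_pos hq_sum hε0 hε1 Finset.disjoint_sdiff hQN hx
  have h₃ := CondIndep.intersection (perturb_nonneg hp (fun i hi v => (hq_pos i hi v).le)
    hε0.le hε1) (by grind [Finset.disjoint_left]) h₁ h₂ hpos
  rw [condIndep_perturb_iff_of_disjoint hq_sum (by grind [Finset.disjoint_left])
    (by grind [Finset.disjoint_left]) (by grind)] at h₃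
  refine hM₀.not_condIndep_sdiff hp (P := M ∩ M₀) ?_ ?_
  · exact Finset.ssubset_iff_subset_ne.2 ⟨Finset.inter_subset_right, by grind⟩
  · rwa [show M₀ \ (M ∩ M₀) = M₀ \ M by grind]

end NoisyBoundary

lemma markovBoundary_unique_of_forall_subset {p : (∀ i, α i) → ℝ} {y : ι} {T M₀ : Finset ι}
    (h₀ : MarkovBlanket p y T M₀) (hmin : ∀ M, MarkovBlanket p y T M → M₀ ⊆ M) :
    MarkovBoundary p y T M₀ ∧ ∀ M, MarkovBoundary p y T M → M = M₀ :=
  ⟨⟨h₀, fun M hM hblanket => not_subset_of_ssubset hM (hmin M hblanket)⟩,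
    fun M hM => ((hmin M hM.1).eq_or_ssubset.resolve_right fun h => hM.2 M₀ h h₀).symm⟩

variable [∀ i, Nonempty (α i)]

theorem unique_markov_boundary_after_noise_general
    (p : (∀ i, α i) → ℝ) (hp : IsDist p)
    (y : ι) (S : Finset ι) (hyS : y ∉ S)
    (M₀ : Finset ι) (hM₀ : MarkovBoundary p y S M₀)
    (ε : ℝ) (hε0 : 0 < ε) (hε1 : ε < 1)
    (q : ∀ i, α i → ℝ) (hq : ∀ i ∈ S \ M₀, (∀ v, 0 < q i v) ∧ ∑ v, q i v = 1) :
    MarkovBoundary (perturb p (S \ M₀) ε q) y S M₀ ∧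
      ∀ M, MarkovBoundary (perturb p (S \ M₀) ε q) y S M → M = M₀ := by
  have hq_pos : ∀ i ∈ S \ M₀, ∀ v, 0 < q i v := fun i hi => (hq i hi).1
  have hq_sum : ∀ i ∈ S \ M₀, ∑ v, q i v = 1 := fun i hi => (hq i hi).2
  have hblanket : MarkovBlanket (perturb p (S \ M₀) ε q) y S M₀ :=
    ⟨hM₀.1.1, hM₀.1.2.perturb hq_sum subset_rfl Finset.disjoint_sdiff (by grind)⟩
  exact markovBoundary_unique_of_forall_subset hblanket fun M hM =>
    hM₀.subset_of_markovBlanket_perturb hp.1 hyS hε0 hε1.le hq_pos hq_sum hM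

/-- Lemma 4: if `Y` has multiple Markov boundaries within `S` and `M₀` is
one of them, then after adding ε-noise (`0 < ε < 1`, noise pmfs everywhere positive) to
every variable in `S \ M₀`, the set `M₀` is the unique Markov boundary of `Y` within the
perturbed collection. -/
theorem unique_markov_boundary_after_noise
    (p : (∀ i, α i) → ℝ) (hp : IsDist p)
    (y : ι) (S : Finset ι) (hyS : y ∉ S)
    (hmulti : ∃ M₁ M₂, MarkovBoundary p y S M₁ ∧ MarkovBoundary p y S M₂ ∧ M₁ ≠ M₂)
    (M₀ : Finset ι) (hM₀ : MarkovBoundary p y S M₀)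
    (ε : ℝ) (hε0 : 0 < ε) (hε1 : ε < 1)
    (q : ∀ i, α i → ℝ) (hq : ∀ i ∈ S \ M₀, (∀ v, 0 < q i v) ∧ ∑ v, q i v = 1) :
    MarkovBoundary (perturb p (S \ M₀) ε q) y S M₀ ∧
      ∀ M, MarkovBoundary (perturb p (S \ M₀) ε q) y S M → M = M₀ :=
  unique_markov_boundary_after_noise_general p hp y S hyS M₀ hM₀ ε hε0 hε1 q hq

end
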